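/- arXiv:1204.5203 — 2 statements merged into one kernel-verified Lean document; each statement's English description precedes it below -/
import Mathlib

section
/- Let n ≥ 4 and let f : 𝔽₂ⁿ → 𝔽₂ be a nested canalizing function whose layered form has layer number r = n−2 with layer sizes k₁ = ⋯ = k_{n−3} = 1 and k_{n−2} = 3. Then the average sensitivity of f equals s^f = 4/3 − (9 + 5·(−1)^{n−1})/(3 · 2ⁿ). -/
/-- `f` is nested canalizing in the variable order `σ(0), σ(1), …, σ(n-1)`
with canalizing input values `a` and canalized output values `b`:
`f x = b k` whenever `x (σ j) = a j + 1` for all `j < k` and `x (σ k) = a k`,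
and `f x = b (last) + 1` whenever `x (σ j) = a j + 1` for all `j`. -/
def IsNCF {n : ℕ} (f : (Fin n → ZMod 2) → ZMod 2) (σ : Equiv.Perm (Fin n))
    (a b : Fin n → ZMod 2) : Prop :=
  (∀ (k : Fin n) (x : Fin n → ZMod 2),
      (∀ j : Fin n, j < k → x (σ j) = a j + 1) → x (σ k) = a k → f x = b k) ∧
  (∀ k : Fin n, (∀ j : Fin n, j ≤ k) →
      ∀ x : Fin n → ZMod 2, (∀ j : Fin n, x (σ j) = a j + 1) → f x = b k + 1)

/-- The nested expression `M i * (M (i+1) * ( … * (M (i+t-1) + 1) … ) + 1)`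
with `t` factors, i.e. `nestVal M t i = Mᵢ(M_{i+1}(⋯(M_{i+t-1} ⊕ 1)⋯) ⊕ 1)`. -/
def nestVal (M : ℕ → ZMod 2) : ℕ → ℕ → ZMod 2
  | 0, _ => 0
  | 1, i => M i
  | (t + 2), i => M i * (nestVal M (t + 1) (i + 1) + 1)

/-- The extended monomial of the `i`-th layer, given the layer assignment `L`
and the complemented inputs `a`:  `Mᵢ(x) = ∏_{L j = i} (x j ⊕ a j)`. -/
def layerMon {n r : ℕ} (L : Fin n → Fin r) (a : Fin n → ZMod 2) (i : ℕ)
    (x : Fin n → ZMod 2) : ZMod 2 :=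
  ∏ j ∈ Finset.univ.filter (fun j : Fin n => (L j : ℕ) = i), (x j + a j)

/-- `kᵢ`, the number of variables in the `i`-th layer. -/
def layerSize {n r : ℕ} (L : Fin n → Fin r) (i : ℕ) : ℕ :=
  (Finset.univ.filter (fun j : Fin n => (L j : ℕ) = i)).card

/-- `K_l = k₀ + k₁ + ⋯ + k_{l-1}`, the number of variables in the first `l` layers. -/
def layerSum {n r : ℕ} (L : Fin n → Fin r) (l : ℕ) : ℕ :=
  ∑ i ∈ Finset.range l, layerSize L i

/-- `f` is given in the layered form
`f = M₁(M₂(⋯(M_{r−1}(M_r ⊕ 1) ⊕ 1)⋯) ⊕ 1) ⊕ b`, where the `Mᵢ` are extended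
monomials in pairwise disjoint sets of variables comprising all `n` variables
(the variable set of `Mᵢ` being the `i`-th layer `{j | L j = i}`), every layer
is nonempty, and the last layer has at least two variables. -/
def IsLayeredForm {n r : ℕ} (f : (Fin n → ZMod 2) → ZMod 2)
    (L : Fin n → Fin r) (a : Fin n → ZMod 2) (b : ZMod 2) : Prop :=
  1 ≤ r ∧
  (∀ i : Fin r, 1 ≤ layerSize L (i : ℕ)) ∧
  2 ≤ layerSize L (r - 1) ∧
  ∀ x : Fin n → ZMod 2, f x = nestVal (fun i => layerMon L a i x) r 0 + b

/-- The activity `λᵢᶠ = 2⁻ⁿ ∑_x (f(x with xᵢ flipped) ⊕ f(x))`, the Boolean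
difference being regarded as the integer 0 or 1. -/
def activity {n : ℕ} (f : (Fin n → ZMod 2) → ZMod 2) (i : Fin n) : ℚ :=
  (1 / 2 ^ n) * ∑ x : Fin n → ZMod 2,
    ((f (Function.update x i (x i + 1)) + f x).val : ℚ)

/-- The average sensitivity `sᶠ = ∑ᵢ λᵢᶠ`. -/
def avgSens {n : ℕ} (f : (Fin n → ZMod 2) → ZMod 2) : ℚ :=
  ∑ i : Fin n, activity f i

/-!
Flipping `x j`, where `j` lies in layer `l`, changes `f` exactly when every other variable of
the layers `0, …, l` takes its non-canalizing value and the nested tail built from the layers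
`l + 1, …` vanishes. These two events involve disjoint sets of variables, hence are independent
under the uniform distribution on `𝔽₂ⁿ`: the activity of `x j` is `2^(1 - K)`, `K` the number of
variables in the layers `0, …, l`, times `1 - p`, where `p` is the density of the tail. The
density of a tail whose first layer is a single variable is `(1 - p')/2`, `p'` the density of
the shorter tail, starting from `1/8` for the final three-variable layer; summing the activities
over the layers is then a geometric computation.
-/

open Finset Function
open scoped BigOperators

namespace ZMod

lemma cast_val_mul_two {R : Type*} [CommSemiring R] (u v : ZMod 2) :
    ((u * v).val : R) = u.val * v.val := by
  have h : (u * v).val = u.val * v.val := by revert u v; decide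
  rw [h, Nat.cast_mul]

lemma cast_val_add_one_two {R : Type*} [Ring R] (u : ZMod 2) :
    ((u + 1).val : R) = 1 - u.val := by
  have h : (u + 1).val + u.val = 1 := by revert u; decide
  rw [eq_sub_iff_add_eq, ← Nat.cast_add, h, Nat.cast_one]

lemma cast_val_prod_two {R : Type*} [CommSemiring R] {ι : Type*} (s : Finset ι)
    (g : ι → ZMod 2) :
    ((∏ i ∈ s, g i).val : R) = ∏ i ∈ s, ((g i).val : R) := by
  classical
  induction s using Finset.induction_on with
  | empty => rw [prod_empty, prod_empty, val_one, Nat.cast_one]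
  | insert j s hj ih => rw [prod_insert hj, prod_insert hj, cast_val_mul_two, ih]

lemma expect_cast_val_add {K : Type*} [Semifield K] [CharZero K] (c : ZMod 2) :
    𝔼 v : ZMod 2, ((v + c).val : K) = 2⁻¹ := by
  have h : ∑ v : ZMod 2, (v + c).val = 1 := by revert c; decide
  rw [Fintype.expect_eq_sum_div_card, ← Nat.cast_sum, h, ZMod.card]
  norm_num

end ZMod

section Expectation

variable {ι : Type*} [Fintype ι] [DecidableEq ι] {K : Type*} [Semifield K] [CharZero K]

theorem Fintype.prod_expect {α : ι → Type*} [∀ i, Fintype (α i)] (f : ∀ i, α i → K) :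
    ∏ i, 𝔼 v, f i v = 𝔼 x : ∀ i, α i, ∏ i, f i (x i) := by
  simp only [Fintype.expect_eq_sum_div_card, ← Fintype.prod_sum, Fintype.card_pi, Nat.cast_prod,
    prod_div_distrib]

theorem expect_mul_of_dependsOn {α : ι → Type*} [∀ i, Fintype (α i)] [∀ i, Nonempty (α i)]
    {s : Set ι} [DecidablePred (· ∈ s)] {A B : (∀ i, α i) → K}
    (hA : DependsOn A s) (hB : DependsOn B sᶜ) :
    𝔼 x, A x * B x = (𝔼 x, A x) * 𝔼 x, B x := by
  let e := (Equiv.piEquivPiSubtypeProd (· ∈ s) α).symm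
  have hsplit (F : (∀ i, α i) → K) : 𝔼 x, F x = 𝔼 u, 𝔼 v, F (e (u, v)) := by
    rw [← Finset.expect_product', univ_product_univ]
    exact (Fintype.expect_equiv e _ _ fun _ => rfl).symm
  obtain ⟨u₀⟩ : Nonempty (∀ i : {i // i ∈ s}, α i) := inferInstance
  obtain ⟨v₀⟩ : Nonempty (∀ i : {i // i ∉ s}, α i) := inferInstance
  have hA' (u v) : A (e (u, v)) = A (e (u, v₀)) := hA fun i hi => by simp [e, hi]
  have hB' (u v) : B (e (u, v)) = B (e (u₀, v)) := hB fun i hi => by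
    simp [e, Set.notMem_of_mem_compl hi]
  simp only [hsplit, hA', hB', Fintype.expect_const, Fintype.expect_mul_expect]

theorem expect_cast_val_prod_add (T : Finset ι) (a : ι → ZMod 2) :
    𝔼 x : ι → ZMod 2, ((∏ j ∈ T, (x j + a j)).val : K) = 2⁻¹ ^ #T := by
  have hite (x : ι → ZMod 2) : ((∏ j ∈ T, (x j + a j)).val : K)
      = ∏ j, if j ∈ T then ((x j + a j).val : K) else 1 := by
    rw [ZMod.cast_val_prod_two, prod_ite_mem, univ_inter]
  simp only [hite, ← Fintype.prod_expect (fun j v => if j ∈ T then ((v + a j).val : K) else 1)]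
  have hmean (j : ι) :
      𝔼 v, (if j ∈ T then ((v + a j).val : K) else 1) = if j ∈ T then 2⁻¹ else 1 := by
    split_ifs
    · exact ZMod.expect_cast_val_add _
    · exact Fintype.expect_const _
  simp only [hmean, prod_ite_mem, univ_inter, prod_const]

end Expectation

lemma nestVal_succ (M : ℕ → ZMod 2) (t l : ℕ) :
    nestVal M (t + 1) l = M l * (nestVal M t (l + 1) + 1) := by
  rcases t with _ | t
  · simp [nestVal]
  · rfl

lemma nestVal_congr {M M' : ℕ → ZMod 2} {t l : ℕ}
    (h : ∀ i, l ≤ i → i < l + t → M i = M' i) : nestVal M t l = nestVal M' t l := by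
  induction t generalizing l with
  | zero => rfl
  | succ t ih =>
    rw [nestVal_succ, nestVal_succ, h l le_rfl (by omega),
      ih fun i hi hi' => h i (by omega) (by omega)]

lemma nestVal_update_add_nestVal (M : ℕ → ZMod 2) (c : ZMod 2) {p t l : ℕ}
    (hlp : l ≤ p) (hpt : p < l + t) :
    nestVal (update M p c) t l + nestVal M t l =
      (∏ i ∈ Ico l p, M i) * (c + M p) * (nestVal M (l + t - (p + 1)) (p + 1) + 1) := by
  induction t generalizing l with
  | zero => omega
  | succ t ih =>
    rw [nestVal_succ, nestVal_succ]
    rcases hlp.eq_or_lt with rfl | hlp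
    · have htail : nestVal (update M l c) t (l + 1) = nestVal M t (l + 1) :=
        nestVal_congr fun i hi _ => update_of_ne (by omega) _ _
      rw [htail, update_self, Ico_self, prod_empty, show l + (t + 1) - (l + 1) = t by omega]
      ring
    · have hchar : ∀ u A B : ZMod 2, u * (A + 1) + u * (B + 1) = u * (A + B) := by decide
      rw [update_of_ne hlp.ne, hchar, ih hlp (by omega), prod_eq_prod_Ico_succ_bot hlp,
        show l + (t + 1) = l + 1 + t by omega]
      ring

lemma activity_eq_expect {n : ℕ} (f : (Fin n → ZMod 2) → ZMod 2) (i : Fin n) :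
    activity f i = 𝔼 x, ((f (update x i (x i + 1)) + f x).val : ℚ) := by
  simp [activity, Fintype.expect_eq_sum_div_card, div_eq_inv_mul]

section LayeredForm

variable {n r : ℕ} (L : Fin n → Fin r) (a : Fin n → ZMod 2)

lemma layerMon_dependsOn (i : ℕ) : DependsOn (layerMon L a i) {j | (L j : ℕ) = i} :=
  fun _ _ h => prod_congr rfl fun j hj => by rw [h j (mem_filter.1 hj).2]

lemma nestVal_layerMon_dependsOn (t l : ℕ) :
    DependsOn (fun x => nestVal (fun i => layerMon L a i x) t l) {j | l ≤ (L j : ℕ)} :=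
  fun _ _ h => nestVal_congr fun i hi _ =>
    layerMon_dependsOn L a i fun j (hj : (L j : ℕ) = i) => h j (hi.trans_eq hj.symm)

lemma expect_cast_val_layerMon (i : ℕ) :
    𝔼 x, ((layerMon L a i x).val : ℚ) = 2⁻¹ ^ layerSize L i :=
  expect_cast_val_prod_add _ a

lemma prod_range_layerMon (l : ℕ) (x : Fin n → ZMod 2) :
    ∏ i ∈ range l, layerMon L a i x = ∏ j with (L j : ℕ) < l, (x j + a j) := by
  rw [← prod_fiberwise_of_maps_to (g := fun j => (L j : ℕ)) (t := range l)
    fun j hj => by simpa using hj]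
  refine prod_congr rfl fun i hi => prod_congr ?_ fun _ _ => rfl
  ext j
  simp only [mem_range, mem_filter, mem_univ, true_and] at hi ⊢
  omega

lemma layerMon_update_add_layerMon (j : Fin n) (x : Fin n → ZMod 2) :
    layerMon L a (L j) (update x j (x j + 1)) + layerMon L a (L j) x =
      ∏ k ∈ ({k | (L k : ℕ) = L j} : Finset _).erase j, (x k + a k) := by
  have hj : j ∈ ({k | (L k : ℕ) = L j} : Finset _) := by simp
  have hchar : ∀ u v P : ZMod 2, (u + 1 + v) * P + (u + v) * P = P := by decide
  unfold layerMon
  rw [← mul_prod_erase _ _ hj, ← mul_prod_erase _ _ hj, update_self,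
    prod_congr rfl fun k hk => by rw [update_of_ne (ne_of_mem_erase hk)], hchar]

-- For the last layer `r - (L j + 1) = 0`, and the tail factor is `nestVal _ 0 _ + 1 = 1`.
theorem nestVal_layerMon_update_add (j : Fin n) (x : Fin n → ZMod 2) :
    nestVal (fun i => layerMon L a i (update x j (x j + 1))) r 0 +
        nestVal (fun i => layerMon L a i x) r 0 =
      (∏ k ∈ ({k | (L k : ℕ) ≤ L j} : Finset _).erase j, (x k + a k)) *
        (nestVal (fun i => layerMon L a i x) (r - (L j + 1)) (L j + 1) + 1) := by
  set M := fun i => layerMon L a i x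
  have hM : (fun i => layerMon L a i (update x j (x j + 1))) =
      update M (L j) (layerMon L a (L j) (update x j (x j + 1))) := by
    funext i
    rcases eq_or_ne i (L j) with rfl | hi
    · rw [update_self]
    · rw [update_of_ne hi]
      exact layerMon_dependsOn L a i fun k (hk : (L k : ℕ) = i) =>
        update_of_ne (by rintro rfl; exact hi hk.symm) _ _
  have hsplit : ({k | (L k : ℕ) ≤ L j} : Finset _).erase j =
      ({k | (L k : ℕ) < L j} : Finset _) ∪ ({k | (L k : ℕ) = L j} : Finset _).erase j := by
    ext k
    by_cases hk : k = j
    · simp [hk]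
    · simp only [mem_erase, mem_union, mem_filter, mem_univ, true_and, ne_eq, hk,
        not_false_eq_true]
      omega
  have hdisj : Disjoint ({k | (L k : ℕ) < L j} : Finset _)
      (({k | (L k : ℕ) = L j} : Finset _).erase j) :=
    disjoint_left.2 fun k hk hk' => by simp at hk hk'; omega
  rw [hM, nestVal_update_add_nestVal M _ (Nat.zero_le _) (by omega), ← range_eq_Ico,
    prod_range_layerMon, layerMon_update_add_layerMon, zero_add, hsplit, prod_union hdisj]

theorem activity_eq_of_layered {f : (Fin n → ZMod 2) → ZMod 2} {b : ZMod 2}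
    (hf : ∀ x, f x = nestVal (fun i => layerMon L a i x) r 0 + b) (j : Fin n) :
    activity f j = 2⁻¹ ^ #(({k | (L k : ℕ) ≤ L j} : Finset _).erase j) * (1 -
      𝔼 x, ((nestVal (fun i => layerMon L a i x) (r - (L j + 1)) (L j + 1)).val : ℚ)) := by
  set T := ({k | (L k : ℕ) ≤ L j} : Finset _).erase j
  have hcancel : ∀ u v w : ZMod 2, (u + w) + (v + w) = u + v := by decide
  have hA : DependsOn (fun x => ((∏ k ∈ T, (x k + a k)).val : ℚ)) T :=
    fun _ _ h => congrArg (fun P : ZMod 2 => (P.val : ℚ)) <|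
      prod_congr rfl fun k hk => by rw [h k hk]
  have hB : DependsOn (fun x => 1 -
      ((nestVal (fun i => layerMon L a i x) (r - (L j + 1)) (L j + 1)).val : ℚ)) (↑T)ᶜ :=
    fun _ _ h => congrArg (fun N : ZMod 2 => 1 - (N.val : ℚ)) <|
      nestVal_layerMon_dependsOn L a _ _ fun k (hk : L j + 1 ≤ (L k : ℕ)) =>
        h k (by simp [T]; omega)
  simp only [activity_eq_expect, hf, hcancel, nestVal_layerMon_update_add,
    ZMod.cast_val_mul_two, ZMod.cast_val_add_one_two]
  rw [expect_mul_of_dependsOn hA hB, expect_cast_val_prod_add, expect_sub_distrib,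
    Fintype.expect_one]

theorem expect_nestVal_layerMon_succ (t l : ℕ) :
    𝔼 x, ((nestVal (fun i => layerMon L a i x) (t + 1) l).val : ℚ) =
      2⁻¹ ^ layerSize L l *
        (1 - 𝔼 x, ((nestVal (fun i => layerMon L a i x) t (l + 1)).val : ℚ)) := by
  have hA : DependsOn (fun x => ((layerMon L a l x).val : ℚ)) {j | (L j : ℕ) = l} :=
    fun _ _ h => congrArg (fun P : ZMod 2 => (P.val : ℚ)) (layerMon_dependsOn L a l h)
  have hB : DependsOn (fun x => 1 - ((nestVal (fun i => layerMon L a i x) t (l + 1)).val : ℚ))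
      {j | (L j : ℕ) = l}ᶜ :=
    fun _ _ h => congrArg (fun N : ZMod 2 => 1 - (N.val : ℚ)) <|
      nestVal_layerMon_dependsOn L a t (l + 1) fun k (hk : l + 1 ≤ (L k : ℕ)) =>
        h k (by simp; omega)
  simp only [nestVal_succ, ZMod.cast_val_mul_two, ZMod.cast_val_add_one_two]
  rw [expect_mul_of_dependsOn hA hB, expect_cast_val_layerMon, expect_sub_distrib,
    Fintype.expect_one]

theorem expect_nestVal_layerMon_of_layerSize {t l : ℕ} (hlast : layerSize L (l + t) = 3)
    (hmid : ∀ i, l ≤ i → i < l + t → layerSize L i = 1) :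
    𝔼 x, ((nestVal (fun i => layerMon L a i x) (t + 1) l).val : ℚ) =
      1 / 3 + 5 / 12 * (-1 / 2) ^ (t + 1) := by
  induction t generalizing l with
  | zero =>
    rw [add_zero] at hlast
    rw [expect_nestVal_layerMon_succ, hlast]
    norm_num [nestVal]
  | succ t ih =>
    rw [expect_nestVal_layerMon_succ, hmid l le_rfl (by omega),
      ih (by rwa [show l + 1 + t = l + (t + 1) by omega])
        fun i hi hi' => hmid i (by omega) (by omega)]
    ring

lemma card_filter_le_eq_layerSum (l : ℕ) : #{k | (L k : ℕ) ≤ l} = layerSum L (l + 1) := by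
  rw [card_eq_sum_card_fiberwise (f := fun k => (L k : ℕ)) (t := range (l + 1))
    fun k hk => by simp at hk ⊢; omega]
  refine sum_congr rfl fun i hi => congrArg card ?_
  ext k
  simp only [mem_range, mem_filter, mem_univ, true_and] at hi ⊢
  omega

lemma sum_comp_eq_sum_layerSize_mul (g : ℕ → ℚ) :
    ∑ j, g (L j) = ∑ l ∈ range r, (layerSize L l : ℚ) * g l := by
  rw [← Fin.sum_univ_eq_sum_range (fun l => (layerSize L l : ℚ) * g l),
    ← sum_fiberwise univ L (fun j => g (L j) : Fin n → ℚ)]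
  refine sum_congr rfl fun l _ => ?_
  rw [sum_congr rfl fun j hj => by rw [(mem_filter.1 hj).2], sum_const, nsmul_eq_mul, layerSize]
  simp [Fin.val_inj]

end LayeredForm

lemma sum_range_inv_two_pow_mul_alternating (m : ℕ) :
    ∑ l ∈ range m, (2⁻¹ : ℚ) ^ l * (2 / 3 - 5 / 12 * (-1 / 2) ^ (m - l)) + 3 * 2⁻¹ ^ (m + 2) =
      4 / 3 - (9 + 5 * (-1) ^ (m + 2)) / (3 * 2 ^ (m + 3)) := by
  induction m with
  | zero => norm_num
  | succ m ih =>
    have hshift : ∀ l ∈ range m,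
        (2⁻¹ : ℚ) ^ (l + 1) * (2 / 3 - 5 / 12 * (-1 / 2) ^ (m + 1 - (l + 1))) =
          2⁻¹ * (2⁻¹ ^ l * (2 / 3 - 5 / 12 * (-1 / 2) ^ (m - l))) := fun l _ => by
      rw [Nat.add_sub_add_right]; ring
    rw [sum_range_succ', sum_congr rfl hshift, ← mul_sum, eq_sub_of_add_eq ih, Nat.sub_zero]
    simp only [div_pow, inv_pow]
    field_simp
    ring

def layerActivity (n l : ℕ) : ℚ :=
  if l = n - 3 then 2⁻¹ ^ (n - 1) else 2⁻¹ ^ l * (2 / 3 - 5 / 12 * (-1 / 2) ^ (n - 3 - l))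

lemma layerSum_eq_self {n : ℕ} {L : Fin n → Fin (n - 2)}
    (hsize : ∀ l : Fin (n - 2), layerSize L (l : ℕ) = if (l : ℕ) = n - 3 then 3 else 1)
    {l : ℕ} (hl : l ≤ n - 3) : layerSum L l = l := by
  induction l with
  | zero => rfl
  | succ l ih =>
    rw [layerSum, sum_range_succ, ← layerSum, ih (by omega), hsize ⟨l, by omega⟩,
      if_neg (by simp; omega)]

theorem activity_eq_layerActivity {n : ℕ} {L : Fin n → Fin (n - 2)}
    (hsize : ∀ l : Fin (n - 2), layerSize L (l : ℕ) = if (l : ℕ) = n - 3 then 3 else 1)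
    {a : Fin n → ZMod 2} {f : (Fin n → ZMod 2) → ZMod 2} {b : ZMod 2}
    (hf : ∀ x, f x = nestVal (fun i => layerMon L a i x) (n - 2) 0 + b) (j : Fin n) :
    activity f j = layerActivity n (L j) := by
  have hlt := (L j).isLt
  rw [layerActivity, activity_eq_of_layered L a hf j, card_erase_of_mem (by simp),
    card_filter_le_eq_layerSum]
  split_ifs with hj
  · have hsum : layerSum L (L j + 1) = n := by
      rw [layerSum, sum_range_succ, ← layerSum, layerSum_eq_self hsize (by omega), hj,
        hsize ⟨n - 3, by omega⟩, if_pos rfl]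
      omega
    rw [hsum, show n - 2 - (L j + 1) = 0 by omega]
    simp [nestVal]
  · rw [layerSum_eq_self hsize (by omega), Nat.add_sub_cancel,
      show n - 2 - (L j + 1) = n - 4 - L j + 1 by omega,
      expect_nestVal_layerMon_of_layerSize L a
        (by rw [show L j + 1 + (n - 4 - L j) = n - 3 by omega, hsize ⟨n - 3, by omega⟩,
          if_pos rfl])
        fun i hi hi' => by rw [hsize ⟨i, by omega⟩, if_neg (by simp; omega)],
      show n - 4 - L j + 1 = n - 3 - L j by omega]
    ring

/-- For `n ≥ 4`, a nested canalizing function whose layered form has layer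
number `r = n−2` with layer sizes `k₁ = ⋯ = k_{n−3} = 1`, `k_{n−2} = 3` has
average sensitivity `sᶠ = 4/3 − (9 + 5·(−1)^{n−1})/(3·2ⁿ)`. -/
theorem statement18 {n : ℕ} (hn : 4 ≤ n) (f : (Fin n → ZMod 2) → ZMod 2)
    (L : Fin n → Fin (n - 2)) (a : Fin n → ZMod 2) (b : ZMod 2)
    (h : IsLayeredForm f L a b)
    (hsize : ∀ l : Fin (n - 2),
      layerSize L (l : ℕ) = if (l : ℕ) = n - 3 then 3 else 1) :
    avgSens f = 4 / 3 - (9 + 5 * (-1 : ℚ) ^ (n - 1)) / (3 * 2 ^ n) := by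
  obtain ⟨m, rfl⟩ : ∃ m, n = m + 3 := ⟨n - 3, by omega⟩
  rw [avgSens, sum_congr rfl fun j _ => activity_eq_layerActivity hsize h.2.2.2 j,
    sum_comp_eq_sum_layerSize_mul L (layerActivity (m + 3)),
    show range (m + 3 - 2) = range (m + 1) by rfl, sum_range_succ,
    show m + 3 - 1 = m + 2 by omega, ← sum_range_inv_two_pow_mul_alternating m]
  refine congrArg₂ (· + ·) (sum_congr rfl fun l hl => ?_) ?_
  · rw [mem_range] at hl
    rw [hsize ⟨l, by omega⟩, layerActivity, if_neg (by simp; omega), if_neg (by omega),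
      Nat.cast_one, one_mul, show m + 3 - 3 - l = m - l by omega]
  · rw [hsize ⟨m, by omega⟩, layerActivity, if_pos (by simp), if_pos (by simp)]
    norm_num
end

section
/- Let n ≥ 6 be even and let f : 𝔽₂ⁿ → 𝔽₂ be a nested canalizing function whose layered form has layer number r = n/2 with layer sizes k₁ = 1, k₂ = ⋯ = k_{n/2−1} = 2, and k_{n/2} = 3. Then the average sensitivity of f equals s^f = 4/3 − 4/(3 · 2ⁿ). -/
/-!
Write `P g` (`density g`) for the probability that `g` takes the value `1` and `s g` for the
average sensitivity. Peeling off the outermost layer, `f = M * (g + 1)` where `M` is an extended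
monomial in `k` variables on which `g` does not depend, so by independence
`P f = (1 - P g) / 2^k` and `s f = 2k (1 - P g) / 2^k + s g / 2^k`.
For a layer of size `2` the combination `u = s - 2 P` transforms as `u ↦ 1/2 + u/4`; starting
from `u = 1/2` for the innermost layer of size `3`, the nest of the last `t` layers has
`u = 2/3 (1 - 4^(-t))`. The outermost layer, of size `1`, then gives
`s f = 1 + u/2 = 4/3 - 4/(3 * 2^n)` with `t = n/2 - 1`.
-/

open Finset Function

theorem sum_mul_sum_eq_card_smul_sum_mul_of_dependsOn {ι α R : Type*} [Fintype ι]
    [DecidableEq ι] [Fintype α] [CommSemiring R] {g h : (ι → α) → R} {S : Set ι}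
    (hg : DependsOn g S) (hh : DependsOn h Sᶜ) :
    (∑ x, g x) * (∑ y, h y) = Fintype.card (ι → α) • ∑ x, g x * h x := by
  classical
  -- swapping the coordinates of `x` and `y` off `S` is an involution turning `g x * h y`
  -- into `g x' * h x'`
  let swap : (ι → α) × (ι → α) → (ι → α) × (ι → α) :=
    fun p => (S.piecewise p.1 p.2, S.piecewise p.2 p.1)
  have hswap : Involutive swap := fun p => by
    ext i <;> by_cases hi : i ∈ S <;> simp [swap, hi]
  calc (∑ x, g x) * (∑ y, h y)
      = ∑ p : (ι → α) × (ι → α), g (swap p).1 * h (swap p).1 := by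
        rw [sum_mul_sum, ← univ_product_univ, sum_product]
        refine sum_congr rfl fun x _ => sum_congr rfl fun y _ => ?_
        congr 1
        · exact hg fun i hi => by simp [swap, hi]
        · exact hh fun i hi => by simp [swap, Set.piecewise_eq_of_notMem _ _ _ hi]
    _ = ∑ p : (ι → α) × (ι → α), g p.1 * h p.1 :=
        hswap.bijective.sum_comp fun p => g p.1 * h p.1
    _ = _ := by simp [Fintype.sum_prod_type, mul_sum]

theorem ZMod.val_mul_of_two (u v : ZMod 2) : (u * v).val = u.val * v.val := by
  revert u v; decide

theorem ZMod.val_add_one_add_val_of_two (u : ZMod 2) : (u + 1).val + u.val = 1 := by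
  revert u; decide

section BooleanFunctions

variable {n : ℕ}

def density (g : (Fin n → ZMod 2) → ZMod 2) : ℚ := 1 / 2 ^ n * ∑ x, ((g x).val : ℚ)

def boolDeriv (f : (Fin n → ZMod 2) → ZMod 2) (i : Fin n) (x : Fin n → ZMod 2) : ZMod 2 :=
  f (update x i (x i + 1)) + f x

theorem activity_eq_density_boolDeriv (f : (Fin n → ZMod 2) → ZMod 2) (i : Fin n) :
    activity f i = density (boolDeriv f i) := rfl

theorem density_zero : density (0 : (Fin n → ZMod 2) → ZMod 2) = 0 := by
  simp [density]

theorem density_mul_of_dependsOn {g h : (Fin n → ZMod 2) → ZMod 2} {S : Set (Fin n)}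
    (hg : DependsOn g S) (hh : DependsOn h Sᶜ) :
    density (fun x => g x * h x) = density g * density h := by
  have hsum := sum_mul_sum_eq_card_smul_sum_mul_of_dependsOn (R := ℚ) (S := S)
    (g := fun x => ((g x).val : ℚ)) (h := fun x => ((h x).val : ℚ))
    (fun _ _ hxy => by simp only [hg hxy]) (fun _ _ hxy => by simp only [hh hxy])
  simp only [Fintype.card_fun, ZMod.card, Fintype.card_fin, nsmul_eq_mul, Nat.cast_pow,
    Nat.cast_ofNat] at hsum
  simp only [density, ZMod.val_mul_of_two, Nat.cast_mul]
  rw [mul_mul_mul_comm, hsum]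
  field_simp

theorem density_add_one (g : (Fin n → ZMod 2) → ZMod 2) :
    density (fun x => g x + 1) = 1 - density g := by
  have hval (x) : ((g x + 1).val : ℚ) = 1 - (g x).val := by
    rw [eq_sub_iff_add_eq]; exact_mod_cast ZMod.val_add_one_add_val_of_two (g x)
  simp only [density, hval, sum_sub_distrib, sum_const, card_univ, Fintype.card_fun, ZMod.card,
    Fintype.card_fin, nsmul_eq_mul, mul_one]
  field_simp
  push_cast
  ring

theorem density_coord_add (j : Fin n) (c : ZMod 2) : density (fun x => x j + c) = 1 / 2 := by
  -- flipping the `j`-th input swaps the values of `x j + c`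
  let flip : Equiv.Perm (Fin n → ZMod 2) :=
    Involutive.toPerm (fun x => update x j (x j + 1)) fun x => by
      simp [add_assoc, CharTwo.add_self_eq_zero]
  have hflip : density (fun x => x j + c) = density (fun x => x j + c + 1) := by
    simp only [density]
    congr 1
    refine (Equiv.sum_comp flip _).symm.trans (sum_congr rfl fun x _ => ?_)
    rw [show flip x j = x j + 1 from update_self .., add_right_comm]
  rw [density_add_one] at hflip
  linarith

theorem apply_update_of_dependsOn {β : Type*} {f : (Fin n → ZMod 2) → β}
    {S : Set (Fin n)} (hf : DependsOn f S) {i : Fin n} (hi : i ∉ S) (x : Fin n → ZMod 2)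
    (v : ZMod 2) : f (update x i v) = f x :=
  hf fun _ hj => update_of_ne (ne_of_mem_of_not_mem hj hi) ..

theorem dependsOn_boolDeriv {f : (Fin n → ZMod 2) → ZMod 2} {S : Set (Fin n)}
    (hf : DependsOn f S) (i : Fin n) : DependsOn (boolDeriv f i) S := by
  intro x y hxy
  have hupdate : ∀ j ∈ S, update x i (x i + 1) j = update y i (y i + 1) j := by
    intro j hj
    by_cases hji : j = i
    · subst hji; simp [hxy j hj]
    · simp [update_of_ne hji, hxy j hj]
  simp only [boolDeriv, hf hupdate, hf hxy]

theorem boolDeriv_eq_zero_of_dependsOn {f : (Fin n → ZMod 2) → ZMod 2} {S : Set (Fin n)}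
    (hf : DependsOn f S) {i : Fin n} (hi : i ∉ S) : boolDeriv f i = 0 := by
  ext x
  rw [boolDeriv, apply_update_of_dependsOn hf hi, CharTwo.add_self_eq_zero, Pi.zero_apply]

theorem boolDeriv_add_const (f : (Fin n → ZMod 2) → ZMod 2) (b : ZMod 2) (i : Fin n) :
    boolDeriv (fun x => f x + b) i = boolDeriv f i := by
  ext x
  rw [boolDeriv, boolDeriv, add_add_add_comm, CharTwo.add_self_eq_zero, add_zero]

theorem avgSens_add_const (f : (Fin n → ZMod 2) → ZMod 2) (b : ZMod 2) :
    avgSens (fun x => f x + b) = avgSens f := by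
  simp only [avgSens, activity_eq_density_boolDeriv, boolDeriv_add_const]

theorem boolDeriv_mul_of_dependsOn_left {m : (Fin n → ZMod 2) → ZMod 2}
    (g : (Fin n → ZMod 2) → ZMod 2) {S : Set (Fin n)} (hm : DependsOn m S) {i : Fin n}
    (hi : i ∉ S) : boolDeriv (fun x => m x * g x) i = fun x => m x * boolDeriv g i x := by
  ext x
  rw [boolDeriv, boolDeriv, apply_update_of_dependsOn hm hi, mul_add]

theorem boolDeriv_mul_of_dependsOn_right (m : (Fin n → ZMod 2) → ZMod 2)
    {g : (Fin n → ZMod 2) → ZMod 2} {S : Set (Fin n)} (hg : DependsOn g S) {i : Fin n}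
    (hi : i ∉ S) : boolDeriv (fun x => m x * g x) i = fun x => boolDeriv m i x * g x := by
  ext x
  rw [boolDeriv, boolDeriv, apply_update_of_dependsOn hg hi, add_mul]

theorem dependsOn_prod_add (T : Finset (Fin n)) (a : Fin n → ZMod 2) :
    DependsOn (fun x : Fin n → ZMod 2 => ∏ j ∈ T, (x j + a j)) T :=
  fun _ _ hxy => prod_congr rfl fun j hj => by rw [hxy j hj]

theorem density_prod_add (T : Finset (Fin n)) (a : Fin n → ZMod 2) :
    density (fun x => ∏ j ∈ T, (x j + a j)) = 1 / 2 ^ T.card := by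
  classical
  induction T using Finset.induction_on with
  | empty =>
    simp only [prod_empty, density, ZMod.val_one, Nat.cast_one, sum_const, card_univ,
      Fintype.card_fun, ZMod.card, Fintype.card_fin, nsmul_eq_mul, mul_one, card_empty]
    push_cast
    field_simp
  | insert j T hj ih =>
    simp only [prod_insert hj]
    rw [density_mul_of_dependsOn (S := {j}) (fun _ _ hxy => by rw [hxy j rfl])
      ((dependsOn_prod_add T a).mono (by simpa using hj)), density_coord_add, ih,
      card_insert_of_notMem hj, pow_succ]
    field_simp

theorem boolDeriv_prod_add {T : Finset (Fin n)} (a : Fin n → ZMod 2) {i : Fin n}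
    (hi : i ∈ T) :
    boolDeriv (fun x => ∏ j ∈ T, (x j + a j)) i
      = fun x => ∏ j ∈ T.erase i, (x j + a j) := by
  ext x
  have hflip : ∀ u v : ZMod 2, (u + 1) * v + u * v = v := by decide
  rw [boolDeriv, ← mul_prod_erase T _ hi, ← mul_prod_erase T _ hi,
    apply_update_of_dependsOn (dependsOn_prod_add (T.erase i) a) (by simp), update_self,
    add_right_comm, hflip]

theorem density_prod_add_mul (T : Finset (Fin n)) (a : Fin n → ZMod 2)
    {h : (Fin n → ZMod 2) → ZMod 2} (hh : DependsOn h (↑T)ᶜ) :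
    density (fun x => (∏ j ∈ T, (x j + a j)) * (h x + 1)) = (1 - density h) / 2 ^ T.card := by
  rw [density_mul_of_dependsOn (dependsOn_prod_add T a) fun _ _ hxy => by simp only [hh hxy],
    density_prod_add, density_add_one]
  ring

theorem activity_prod_add_mul (T : Finset (Fin n)) (a : Fin n → ZMod 2)
    {h : (Fin n → ZMod 2) → ZMod 2} (hh : DependsOn h (↑T)ᶜ) (i : Fin n) :
    activity (fun x => (∏ j ∈ T, (x j + a j)) * (h x + 1)) i
      = (if i ∈ T then 2 * (1 - density h) / 2 ^ T.card else 0) + activity h i / 2 ^ T.card := by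
  have hh1 : DependsOn (fun x => h x + 1) (↑T)ᶜ := fun _ _ hxy => by simp only [hh hxy]
  rw [activity_eq_density_boolDeriv, activity_eq_density_boolDeriv]
  by_cases hi : i ∈ T
  · have hcard : (2 : ℚ) ^ T.card = 2 * 2 ^ (T.erase i).card := by
      rw [card_erase_of_mem hi, ← pow_succ', Nat.sub_add_cancel (card_pos.mpr ⟨i, hi⟩)]
    rw [boolDeriv_mul_of_dependsOn_right _ hh1 (by simpa), boolDeriv_prod_add a hi,
      boolDeriv_eq_zero_of_dependsOn hh (by simpa), if_pos hi,
      density_prod_add_mul _ a (hh.mono (Set.compl_subset_compl.mpr (by simp))), density_zero,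
      hcard, zero_div, add_zero]
    field_simp
  · rw [boolDeriv_mul_of_dependsOn_left _ (dependsOn_prod_add T a) hi, boolDeriv_add_const,
      density_mul_of_dependsOn (dependsOn_prod_add T a) (dependsOn_boolDeriv hh i),
      density_prod_add, if_neg hi]
    ring

theorem avgSens_prod_add_mul (T : Finset (Fin n)) (a : Fin n → ZMod 2)
    {h : (Fin n → ZMod 2) → ZMod 2} (hh : DependsOn h (↑T)ᶜ) :
    avgSens (fun x => (∏ j ∈ T, (x j + a j)) * (h x + 1))
      = T.card * (2 * (1 - density h) / 2 ^ T.card) + avgSens h / 2 ^ T.card := by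
  classical
  simp only [avgSens, activity_prod_add_mul T a hh, sum_add_distrib, sum_ite_mem, univ_inter,
    sum_const, nsmul_eq_mul, sum_div]

end BooleanFunctions

section Layers

variable {n r : ℕ} (L : Fin n → Fin r) (a : Fin n → ZMod 2)

def layer (i : ℕ) : Finset (Fin n) := univ.filter fun j => (L j : ℕ) = i

def layerNest (t i : ℕ) (x : Fin n → ZMod 2) : ZMod 2 :=
  nestVal (fun l => layerMon L a l x) t i

theorem layerNest_succ (t i : ℕ) :
    layerNest L a (t + 1) i
      = fun x => (∏ j ∈ layer L i, (x j + a j)) * (layerNest L a t (i + 1) x + 1) := by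
  ext x
  cases t <;> simp [layerNest, nestVal, layerMon, layer]

theorem dependsOn_layerNest (t i : ℕ) :
    DependsOn (layerNest L a t i) {j | i ≤ (L j : ℕ)} := by
  induction t generalizing i with
  | zero => exact fun _ _ _ => rfl
  | succ t ih =>
    intro x y hxy
    have hlayer : ∀ j ∈ (layer L i : Set (Fin n)), x j = y j :=
      fun j hj => hxy j (mem_filter.mp (mem_coe.mp hj)).2.ge
    have htail : ∀ j ∈ {j | i + 1 ≤ (L j : ℕ)}, x j = y j :=
      fun j hj => hxy j (Nat.le_of_succ_le hj)
    simp only [layerNest_succ, dependsOn_prod_add _ a hlayer, ih (i + 1) htail]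

theorem dependsOn_layerNest_succ_compl_layer (t i : ℕ) :
    DependsOn (layerNest L a t (i + 1)) (↑(layer L i))ᶜ :=
  (dependsOn_layerNest L a t (i + 1)).mono fun j (hj : i + 1 ≤ (L j : ℕ)) hj' => by
    simp only [layer, coe_filter, mem_univ, true_and, Set.mem_ofPred_eq] at hj'
    omega

theorem density_layerNest_zero (i : ℕ) : density (layerNest L a 0 i) = 0 :=
  density_zero

theorem avgSens_layerNest_zero (i : ℕ) : avgSens (layerNest L a 0 i) = 0 := by
  simp [avgSens, activity, layerNest, nestVal]

theorem density_layerNest_succ (t i : ℕ) :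
    density (layerNest L a (t + 1) i)
      = (1 - density (layerNest L a t (i + 1))) / 2 ^ layerSize L i := by
  rw [layerNest_succ]
  exact density_prod_add_mul _ a (dependsOn_layerNest_succ_compl_layer L a t i)

theorem avgSens_layerNest_succ (t i : ℕ) :
    avgSens (layerNest L a (t + 1) i)
      = layerSize L i * (2 * (1 - density (layerNest L a t (i + 1))) / 2 ^ layerSize L i)
        + avgSens (layerNest L a t (i + 1)) / 2 ^ layerSize L i := by
  rw [layerNest_succ]
  exact avgSens_prod_add_mul _ a (dependsOn_layerNest_succ_compl_layer L a t i)

-- each layer of size `2` maps `u = avgSens - 2 * density` of the tail to `1/2 + u/4`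
theorem avgSens_sub_two_mul_density_layerNest
    (hsize : ∀ i < r, layerSize L i = if i = 0 then 1 else if i = r - 1 then 3 else 2)
    {t : ℕ} (ht : 1 ≤ t) (htr : t < r) :
    avgSens (layerNest L a t (r - t)) - 2 * density (layerNest L a t (r - t))
      = 2 / 3 * (1 - 1 / 4 ^ t) := by
  induction t, ht using Nat.le_induction with
  | base =>
    rw [avgSens_layerNest_succ, density_layerNest_succ, hsize (r - 1) (by omega),
      if_neg (by omega), if_pos rfl, Nat.sub_add_cancel (by omega), avgSens_layerNest_zero,
      density_layerNest_zero]
    norm_num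
  | succ t ht ih =>
    have hsucc : r - (t + 1) + 1 = r - t := by omega
    rw [avgSens_layerNest_succ, density_layerNest_succ, hsucc, hsize (r - (t + 1)) (by omega),
      if_neg (by omega), if_neg (by omega)]
    linear_combination (1 / 4 : ℚ) * ih (by omega)

theorem avgSens_layerNest_of_layerSize
    (hsize : ∀ i < r, layerSize L i = if i = 0 then 1 else if i = r - 1 then 3 else 2)
    (hr : 2 ≤ r) :
    avgSens (layerNest L a r 0) = 4 / 3 - 4 / (3 * 4 ^ r) := by
  obtain ⟨t, rfl⟩ : ∃ t, r = t + 1 := ⟨r - 1, by omega⟩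
  have htail := avgSens_sub_two_mul_density_layerNest L a hsize (t := t) (by omega) (by omega)
  rw [avgSens_layerNest_succ, hsize 0 (by omega), if_pos rfl, show 0 + 1 = t + 1 - t by omega]
  linear_combination (1 / 2 : ℚ) * htail

end Layers

/-- For even `n ≥ 6`, a nested canalizing function whose layered form has
layer number `r = n/2` with layer sizes `k₁ = 1`, `k₂ = ⋯ = k_{n/2−1} = 2`,
`k_{n/2} = 3` has average sensitivity `sᶠ = 4/3 − 4/(3·2ⁿ)`. -/
theorem statement19 {n : ℕ} (hn : 6 ≤ n) (hev : Even n)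
    (f : (Fin n → ZMod 2) → ZMod 2)
    (L : Fin n → Fin (n / 2)) (a : Fin n → ZMod 2) (b : ZMod 2)
    (h : IsLayeredForm f L a b)
    (hsize : ∀ l : Fin (n / 2),
      layerSize L (l : ℕ) =
        if (l : ℕ) = 0 then 1 else if (l : ℕ) = n / 2 - 1 then 3 else 2) :
    avgSens f = 4 / 3 - 4 / (3 * 2 ^ n) := by
  have hf : f = fun x => layerNest L a (n / 2) 0 x + b := funext h.2.2.2
  have hpow : (4 : ℚ) ^ (n / 2) = 2 ^ n := by
    obtain ⟨k, rfl⟩ := hev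
    rw [show (k + k) / 2 = k by omega, ← two_mul, pow_mul]
    norm_num
  rw [hf, avgSens_add_const,
    avgSens_layerNest_of_layerSize L a (fun i hi => hsize ⟨i, hi⟩) (by omega), hpow]
end
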